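/- Let k be a field, H = k[X, X⁻¹] the Laurent polynomial Hopf algebra, and B = k[X] ⊆ H the subalgebra generated by X. Then for every z ∈ ℤ, the element Xᶻ ⊗ 1 − 1 ⊗ Xᶻ of H ⊗ H lies in J_B; consequently, the equalizer {h ∈ H : h ⊗ 1 − 1 ⊗ h ∈ J_B} of the two canonical maps H → H ⊗_B H equals all of H and hence strictly contains B (e.g. it contains X⁻¹ ∉ B). -/

import Mathlib

open TensorProduct

noncomputable section

namespace HopfGalois

variable (k : Type*) [Field k] (G : Type*) [CommGroup G]

/-- The comultiplication of the group algebra: the algebra map determined by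
`g ↦ g ⊗ g` on group elements. -/
def comulAlgHom : MonoidAlgebra k G →ₐ[k] MonoidAlgebra k G ⊗[k] MonoidAlgebra k G :=
  MonoidAlgebra.lift k _ G
    { toFun := fun g => MonoidAlgebra.of k G g ⊗ₜ[k] MonoidAlgebra.of k G g
      map_one' := by
        simp only [MonoidAlgebra.of_apply, Algebra.TensorProduct.one_def,
          ← MonoidAlgebra.one_def]
      map_mul' := fun g h => by
        simp [Algebra.TensorProduct.tmul_mul_tmul] }

/-- The counit of the group algebra: the algebra map determined by `g ↦ 1`. -/
def counitAlgHom : MonoidAlgebra k G →ₐ[k] k :=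
  MonoidAlgebra.lift k k G 1

lemma comulAlgHom_single (g : G) (c : k) :
    comulAlgHom k G (MonoidAlgebra.single g c) =
      MonoidAlgebra.single g c ⊗ₜ[k] MonoidAlgebra.single g 1 := by
  simp [comulAlgHom, MonoidAlgebra.lift_single, TensorProduct.smul_tmul',
    Finsupp.smul_single]

lemma counitAlgHom_single (g : G) (c : k) :
    counitAlgHom k G (MonoidAlgebra.single g c) = c := by
  simp [counitAlgHom, MonoidAlgebra.lift_single]

/-- The antipode of the group algebra, determined by `g ↦ g⁻¹` on group elements. -/
def antipodeLin : MonoidAlgebra k G →ₗ[k] MonoidAlgebra k G :=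
  MonoidAlgebra.mapDomainLinearMap k k (fun g : G => g⁻¹)

lemma antipodeLin_single (g : G) (c : k) :
    antipodeLin k G (MonoidAlgebra.single g c) = MonoidAlgebra.single g⁻¹ c := by
  exact MonoidAlgebra.mapDomainLinearMap_single _ _ _

lemma ga_coassoc : (TensorProduct.assoc k _ _ _).toLinearMap ∘ₗ
    ((comulAlgHom k G).toLinearMap).rTensor _ ∘ₗ (comulAlgHom k G).toLinearMap
    = ((comulAlgHom k G).toLinearMap).lTensor _ ∘ₗ (comulAlgHom k G).toLinearMap := by
  refine MonoidAlgebra.lhom_ext' fun g => LinearMap.ext_ring ?_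
  simp [comulAlgHom_single]

lemma ga_rcounit : ((counitAlgHom k G).toLinearMap).rTensor _ ∘ₗ
    (comulAlgHom k G).toLinearMap = TensorProduct.mk k _ _ 1 := by
  refine MonoidAlgebra.lhom_ext' fun g => LinearMap.ext_ring ?_
  simp [comulAlgHom_single, counitAlgHom_single, MonoidAlgebra.one_def]

lemma ga_lcounit : ((counitAlgHom k G).toLinearMap).lTensor _ ∘ₗ
    (comulAlgHom k G).toLinearMap = (TensorProduct.mk k _ _).flip 1 := by
  refine MonoidAlgebra.lhom_ext' fun g => LinearMap.ext_ring ?_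
  simp [comulAlgHom_single, counitAlgHom_single, MonoidAlgebra.one_def]

lemma ga_mul_counit :
    (LinearMap.mul k (MonoidAlgebra k G)).compr₂ (counitAlgHom k G).toLinearMap =
    (LinearMap.mul k k).compl₁₂ (counitAlgHom k G).toLinearMap
      (counitAlgHom k G).toLinearMap := by
  refine MonoidAlgebra.lhom_ext' fun g => LinearMap.ext_ring ?_
  refine MonoidAlgebra.lhom_ext' fun g' => LinearMap.ext_ring ?_
  simp [MonoidAlgebra.single_mul_single, counitAlgHom_single]

lemma ga_mul_comul :
    (LinearMap.mul k (MonoidAlgebra k G)).compr₂ (comulAlgHom k G).toLinearMap =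
    (LinearMap.mul k (MonoidAlgebra k G ⊗[k] MonoidAlgebra k G)).compl₁₂
      (comulAlgHom k G).toLinearMap (comulAlgHom k G).toLinearMap := by
  refine MonoidAlgebra.lhom_ext' fun g => LinearMap.ext_ring ?_
  refine MonoidAlgebra.lhom_ext' fun g' => LinearMap.ext_ring ?_
  simp [MonoidAlgebra.single_mul_single, comulAlgHom_single,
    Algebra.TensorProduct.tmul_mul_tmul]

lemma ga_antipode_r : LinearMap.mul' k (MonoidAlgebra k G) ∘ₗ
      (antipodeLin k G).rTensor _ ∘ₗ (comulAlgHom k G).toLinearMap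
    = Algebra.linearMap k (MonoidAlgebra k G) ∘ₗ (counitAlgHom k G).toLinearMap := by
  refine MonoidAlgebra.lhom_ext' fun g => LinearMap.ext_ring ?_
  simp [comulAlgHom_single, counitAlgHom_single, antipodeLin_single,
    MonoidAlgebra.single_mul_single, MonoidAlgebra.one_def,
    Algebra.algebraMap_eq_smul_one, Finsupp.smul_single]

lemma ga_antipode_l : LinearMap.mul' k (MonoidAlgebra k G) ∘ₗ
      (antipodeLin k G).lTensor _ ∘ₗ (comulAlgHom k G).toLinearMap
    = Algebra.linearMap k (MonoidAlgebra k G) ∘ₗ (counitAlgHom k G).toLinearMap := by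
  refine MonoidAlgebra.lhom_ext' fun g => LinearMap.ext_ring ?_
  simp [comulAlgHom_single, counitAlgHom_single, antipodeLin_single,
    MonoidAlgebra.single_mul_single, MonoidAlgebra.one_def,
    Algebra.algebraMap_eq_smul_one, Finsupp.smul_single]

/-- The group algebra `k[G]` of a commutative group `G` is a Hopf algebra, with
`Δ(g) = g ⊗ g`, `ε(g) = 1` and `S(g) = g⁻¹` for group elements `g`. -/
instance : HopfAlgebra k (MonoidAlgebra k G) :=
  { (inferInstance : Algebra k (MonoidAlgebra k G)) with
    comul := (comulAlgHom k G).toLinearMap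
    counit := (counitAlgHom k G).toLinearMap
    coassoc := ga_coassoc k G
    rTensor_counit_comp_comul := ga_rcounit k G
    lTensor_counit_comp_comul := ga_lcounit k G
    counit_one := by simp
    mul_compr₂_counit := ga_mul_counit k G
    comul_one := by simp
    mul_compr₂_comul := ga_mul_comul k G
    antipode := antipodeLin k G
    mul_antipode_rTensor_comul := ga_antipode_r k G
    mul_antipode_lTensor_comul := ga_antipode_l k G }

/-- The Laurent polynomial Hopf algebra `k[X, X⁻¹]`: the group algebra of `ℤ`, with
`Δ(Xᶻ) = Xᶻ ⊗ Xᶻ`, `ε(Xᶻ) = 1` and `S(Xᶻ) = X⁻ᶻ`. -/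
abbrev LaurentHopf (k : Type*) [Field k] : Type _ := MonoidAlgebra k (Multiplicative ℤ)

/-- The element `Xᶻ` of `k[X, X⁻¹]`. -/
def Xpow (k : Type*) [Field k] (z : ℤ) : LaurentHopf k :=
  MonoidAlgebra.of k (Multiplicative ℤ) (Multiplicative.ofAdd z)



section GaloisDefs

variable (k : Type*) (H : Type*) [Field k] [Ring H] [HopfAlgebra k H]

/-- The left ideal of `H` generated by a subset `S`, as a `k`-subspace of `H`. -/
def leftIdealGen (S : Set H) : Submodule k H :=
  Submodule.span k {z : H | ∃ h : H, ∃ b ∈ S, z = h * b}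

/-- `S⁺ = S ∩ ker ε`. -/
def plusPart (S : Set H) : Set H :=
  {b ∈ S | (Coalgebra.counit : H →ₗ[k] k) b = 0}

/-- `H·S⁺`, the left ideal of `H` generated by `S ∩ ker ε`. -/
def HSplus (S : Set H) : Submodule k H :=
  leftIdealGen k H (plusPart k H S)

/-- The subspace `J_B ⊆ H ⊗ H` spanned by `{xb ⊗ y − x ⊗ by : x, y ∈ H, b ∈ B}`,
so that `H ⊗_B H = (H ⊗ H)/J_B`. -/
def JB (S : Set H) : Submodule k (H ⊗[k] H) :=
  Submodule.span k
    {z : H ⊗[k] H | ∃ x y : H, ∃ b ∈ S, z = (x * b) ⊗ₜ[k] y - x ⊗ₜ[k] (b * y)}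

end GaloisDefs

/-!
Each `Xᶻ` lies in the equalizer: for `z ≥ 0` it lies in `B`, and for `z < 0` its inverse
`X⁻ᶻ` lies in `B`, which already forces `Xᶻ ⊗ 1 = 1 ⊗ Xᶻ` in `H ⊗_B H`. The monomials span `H`,
and `B` is spanned by the monomials `Xⁿ` with `n ≥ 0`, so `X⁻¹ ∉ B`.
-/

section Equalizer

variable (H : Type*) [Ring H] [HopfAlgebra k H]

/-- The equalizer of the two canonical maps `H → H ⊗_B H`, `h ↦ h ⊗ 1` and `h ↦ 1 ⊗ h`. -/
def equalizer (S : Set H) : Submodule k H :=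
  (JB k H S).comap ((TensorProduct.mk k H H).flip 1 - TensorProduct.mk k H H 1)

variable {k H} {S : Set H}

lemma mem_equalizer {h : H} :
    h ∈ equalizer k H S ↔ h ⊗ₜ[k] (1 : H) - 1 ⊗ₜ[k] h ∈ JB k H S :=
  Iff.rfl

lemma mem_equalizer_of_mem {b : H} (hb : b ∈ S) : b ∈ equalizer k H S :=
  Submodule.subset_span ⟨1, 1, b, hb, by simp⟩

/-- Taking `x = y = a` in the generator `xb ⊗ y − x ⊗ by` of `J_B` gives `1 ⊗ a − a ⊗ 1`. -/
lemma mem_equalizer_of_mul_eq_one {a b : H} (hb : b ∈ S) (hab : a * b = 1)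
    (hba : b * a = 1) : a ∈ equalizer k H S := by
  rw [mem_equalizer, ← neg_sub]
  exact neg_mem (Submodule.subset_span ⟨a, a, b, hb, by rw [hab, hba]⟩)

end Equalizer

section GroupAlgebra

open MonoidAlgebra

variable {k G}

lemma equalizer_eq_top_of_forall_of_mem {S : Set (MonoidAlgebra k G)}
    (hS : ∀ g, of k G g ∈ equalizer k _ S) : equalizer k _ S = ⊤ :=
  Submodule.eq_top_iff'.2 fun f =>
    Submodule.span_le.2 (by rintro _ ⟨g, -, rfl⟩; exact hS g) (mem_span_support_coeff f)

lemma of_mem_equalizer_of_mem_or_inv_mem {S : Set (MonoidAlgebra k G)} {g : G}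
    (hg : of k G g ∈ S ∨ of k G g⁻¹ ∈ S) : of k G g ∈ equalizer k _ S := by
  rcases hg with hg | hg
  · exact mem_equalizer_of_mem hg
  · exact mem_equalizer_of_mul_eq_one hg (by rw [← map_mul, mul_inv_cancel, map_one])
      (by rw [← map_mul, inv_mul_cancel, map_one])

end GroupAlgebra

section AdjoinOf

open MonoidAlgebra

variable {R M : Type*} [CommSemiring R] [Monoid M]

lemma toSubmodule_adjoin_singleton_of (m : M) :
    Subalgebra.toSubmodule (Algebra.adjoin R {of R M m}) =
      supported R R (Submonoid.powers m) := by
  rw [Algebra.adjoin_eq_span, ← Submonoid.powers_eq_closure, ← Submonoid.map_powers,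
    Submonoid.coe_map, supported_eq_span_single]
  rfl

lemma of_mem_adjoin_singleton_of_iff [Nontrivial R] {m n : M} :
    of R M n ∈ Algebra.adjoin R {of R M m} ↔ n ∈ Submonoid.powers m := by
  rw [← Subalgebra.mem_toSubmodule, toSubmodule_adjoin_singleton_of, mem_supported, of_apply,
    coeff_single, Finsupp.support_single _ one_ne_zero]
  simp

end AdjoinOf

lemma mem_powers_ofAdd_one_or_inv_mem (g : Multiplicative ℤ) :
    g ∈ Submonoid.powers (Multiplicative.ofAdd 1) ∨
      g⁻¹ ∈ Submonoid.powers (Multiplicative.ofAdd 1) := by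
  obtain ⟨n, hn | hn⟩ := Int.eq_nat_or_neg (Multiplicative.toAdd g)
  · exact .inl ⟨n, Multiplicative.toAdd.injective (by simp [hn])⟩
  · exact .inr ⟨n, Multiplicative.toAdd.injective (by simp [hn])⟩

lemma ofAdd_neg_one_notMem_powers :
    Multiplicative.ofAdd (-1 : ℤ) ∉ Submonoid.powers (Multiplicative.ofAdd 1) := by
  rintro ⟨n, hn⟩
  have := congrArg Multiplicative.toAdd hn
  simp at this

/-- For `H = k[X, X⁻¹]` and `B = k[X]`, every `Xᶻ ⊗ 1 − 1 ⊗ Xᶻ`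
lies in `J_B`; consequently the equalizer of the two canonical maps `H → H ⊗_B H` is
all of `H`, and it strictly contains `B` (e.g. `X⁻¹ ∉ B`). -/
theorem laurent_equalizer_eq_univ (k : Type*) [Field k] :
    (∀ z : ℤ, Xpow k z ⊗ₜ[k] (1 : LaurentHopf k) - (1 : LaurentHopf k) ⊗ₜ[k] Xpow k z ∈
      JB k (LaurentHopf k)
        ((Algebra.adjoin k {Xpow k 1} : Subalgebra k (LaurentHopf k)) : Set (LaurentHopf k))) ∧
    {h : LaurentHopf k |
        h ⊗ₜ[k] (1 : LaurentHopf k) - (1 : LaurentHopf k) ⊗ₜ[k] h ∈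
          JB k (LaurentHopf k)
            ((Algebra.adjoin k {Xpow k 1} : Subalgebra k (LaurentHopf k)) :
              Set (LaurentHopf k))}
      = Set.univ ∧
    Xpow k (-1) ∉ (Algebra.adjoin k {Xpow k 1} : Subalgebra k (LaurentHopf k)) := by
  have hB (g : Multiplicative ℤ) :
      MonoidAlgebra.of k _ g ∈ Algebra.adjoin k {Xpow k 1} ↔
        g ∈ Submonoid.powers (Multiplicative.ofAdd 1) :=
    of_mem_adjoin_singleton_of_iff
  have hXpow (z : ℤ) :
      Xpow k z ∈ equalizer k _ (Algebra.adjoin k {Xpow k 1} : Set (LaurentHopf k)) :=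
    of_mem_equalizer_of_mem_or_inv_mem <|
      (mem_powers_ofAdd_one_or_inv_mem _).imp (hB _).2 (hB _).2
  have htop := equalizer_eq_top_of_forall_of_mem fun g => hXpow (Multiplicative.toAdd g)
  exact ⟨hXpow, Set.eq_univ_of_forall fun h => mem_equalizer.1 (htop ▸ Submodule.mem_top),
    fun h => ofAdd_neg_one_notMem_powers ((hB _).1 h)⟩

end HopfGalois
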